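/- Suppose P is a naturally labeled finite poset on {1,…,n} and G_P has connected components C_1, …, C_h. Let M_r be a maximum independent set of C_r for some 1 ≤ r ≤ h. Then for any two maximum independent sets M¹, M² of G_P satisfying M¹ ∩ V(C_r) = M² ∩ V(C_r) = M_r, one has Des(M_r, M¹) = Des(M_r, M²) and Des̄(M_r, M¹) = Des̄(M_r, M²). -/

import Mathlib

/-!
A maximum independent set `M` of `G_P` is laminar, and by maximality every connected ideal that
is nested or disjoint with all members of `M` belongs to `M`. Consequently each `J ∈ M` has a
label (`J \ μ(M,J)` is a single `P`-maximal element of `J`), and `F_M` is the forest of `M` under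
inclusion, so a descent at `J` compares the labels of `J` and of its parent.

If `J` is isolated in `G_P`, it lies inside the principal ideal of its parent's label, and natural
labeling rules out a descent. Otherwise both labels are determined by the component of `J`: a
competing label of `J` would sit in a member of `M` from another component, which saturating by
members of `M` would connect to `J`; and a parent outside the component contains every neighbour
of `J`, so its label is the element through which `J` leaves into a neighbour. As `M¹` and `M²`
agree on `C_r`, they have the same descents at the members of `M_r`.
-/

attribute [local instance] Classical.propDecidable

noncomputable section

open Finset

variable {n : ℕ}

/-- The comparability graph of the poset structure `P` on `Fin n`; for an order
ideal of `P`, connectivity of its induced subgraph in this graph agrees with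
connectivity of the Hasse diagram. -/
def compGraph (P : PartialOrder (Fin n)) : SimpleGraph (Fin n) where
  Adj i j := i ≠ j ∧ (P.le i j ∨ P.le j i)
  symm := by
    constructor
    intro i j h
    exact ⟨h.1.symm, h.2.symm⟩
  loopless := by
    constructor
    intro i h
    exact h.1 rfl

/-- `J` is an order ideal of the poset `P`. -/
def IsIdeal (P : PartialOrder (Fin n)) (J : Finset (Fin n)) : Prop :=
  ∀ i ∈ J, ∀ j : Fin n, P.le j i → j ∈ J

/-- The Hasse diagram of `J` as a subposet of `P` is a connected graph. -/
def JConn (P : PartialOrder (Fin n)) (J : Finset (Fin n)) : Prop :=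
  ((compGraph P).induce (↑J : Set (Fin n))).Connected

/-- `J` is a connected order ideal of `P`. -/
def IsConnIdeal (P : PartialOrder (Fin n)) (J : Finset (Fin n)) : Prop :=
  IsIdeal P J ∧ JConn P J

/-- The type of connected order ideals of `P` (the vertices of `G_P`). -/
abbrev ConnIdeal (P : PartialOrder (Fin n)) : Type :=
  {J : Finset (Fin n) // IsConnIdeal P J}

instance (P : PartialOrder (Fin n)) : Fintype (ConnIdeal P) := Fintype.ofFinite _

/-- `A` and `B` intersect nontrivially. -/
def Nontriv (A B : Finset (Fin n)) : Prop :=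
  (A ∩ B).Nonempty ∧ ¬ A ⊆ B ∧ ¬ B ⊆ A

/-- The graph `G_P` on the connected order ideals of `P`, with two ideals
adjacent iff they intersect nontrivially. -/
def GP (P : PartialOrder (Fin n)) : SimpleGraph (ConnIdeal P) where
  Adj A B := Nontriv A.1 B.1
  symm := by
    constructor
    intro A B h
    exact ⟨by rw [Finset.inter_comm]; exact h.1, h.2.2, h.2.1⟩
  loopless := by
    constructor
    intro A h
    exact h.2.1 (Finset.Subset.refl _)

instance (P : PartialOrder (Fin n)) : Fintype ((GP P).ConnectedComponent) :=
  Fintype.ofFinite _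

instance (P : PartialOrder (Fin n)) : Fintype ((GP P).edgeSet) :=
  Fintype.ofFinite _

/-- `s` is an independent set of the graph `G`. -/
def IsIndep {V : Type*} (G : SimpleGraph V) (s : Finset V) : Prop :=
  ∀ a ∈ s, ∀ b ∈ s, ¬ G.Adj a b

/-- `s` is a maximum independent set of the graph `G`. -/
def IsMaxIndep {V : Type*} (G : SimpleGraph V) (s : Finset V) : Prop :=
  IsIndep G s ∧ ∀ t : Finset V, IsIndep G t → t.card ≤ s.card

/-- `s` is a maximum independent set of the subgraph of `G` induced on the
vertex set `S` (e.g. on a connected component of `G`). -/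
def IsMaxIndepOn {V : Type*} (G : SimpleGraph V) (S : Set V) (s : Finset V) : Prop :=
  ↑s ⊆ S ∧ IsIndep G s ∧ ∀ t : Finset V, ↑t ⊆ S → IsIndep G t → t.card ≤ s.card

/-- `μ(M, J) = ⋃_{J' ∈ M, J' ⊊ J} J'`. -/
def mu (P : PartialOrder (Fin n)) (M : Finset (ConnIdeal P)) (J : Finset (Fin n)) :
    Finset (Fin n) :=
  (M.filter (fun J' => J'.1 ⊂ J)).biUnion (fun J' => J'.1)

/-- The strict order relation of the poset `F_M` associated with a maximum
independent set `M` of `G_P`: `i <_{F_M} j` iff `J_a ⊊ J_b` where `J_a, J_b ∈ M`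
satisfy `J_a \ μ(M,J_a) = {i}` and `J_b \ μ(M,J_b) = {j}`. -/
def FMlt (P : PartialOrder (Fin n)) (M : Finset (ConnIdeal P)) (i j : Fin n) : Prop :=
  ∃ Ja ∈ M, ∃ Jb ∈ M,
    Ja.1 \ mu P M Ja.1 = {i} ∧ Jb.1 \ mu P M Jb.1 = {j} ∧ Ja.1 ⊂ Jb.1

/-- The order relation of the poset `F_M`. -/
def FMle (P : PartialOrder (Fin n)) (M : Finset (ConnIdeal P)) (i j : Fin n) : Prop :=
  i = j ∨ FMlt P M i j

/-- Strict relation associated with the relation `le`. -/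
def ltRel (le : Fin n → Fin n → Prop) (i j : Fin n) : Prop := le i j ∧ i ≠ j

/-- `j` covers `i` in the order given by the relation `le`. -/
def CovRel (le : Fin n → Fin n → Prop) (i j : Fin n) : Prop :=
  ltRel le i j ∧ ∀ k : Fin n, ltRel le i k → ¬ ltRel le k j

/-- The principal order ideal `Λ_i = {j : j ≤ i}` of the order given by `le`. -/
def LamRel (le : Fin n → Fin n → Prop) (i : Fin n) : Finset (Fin n) :=
  Finset.univ.filter (fun j => le j i)

/-- The descent set of a forest order given by the relation `le`:
elements `i` whose parent (the element covering `i`) is smaller than `i`. -/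
def DesRel (le : Fin n → Fin n → Prop) : Finset (Fin n) :=
  Finset.univ.filter (fun i => ∃ j : Fin n, CovRel le i j ∧ j < i)

/-- `Des(M) = Des(F_M)`. -/
def DesM (P : PartialOrder (Fin n)) (M : Finset (ConnIdeal P)) : Finset (Fin n) :=
  DesRel (FMle P M)

/-- `Des(M_r, M)`. -/
def DesMr (P : PartialOrder (Fin n)) (Mr M : Finset (ConnIdeal P)) : Finset (Fin n) :=
  (DesM P M).filter (fun i => ∃ J ∈ Mr, J.1 \ mu P M J.1 = {i})

/-- `Des̄(M_r, M)`. -/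
def DesBarMr (P : PartialOrder (Fin n)) (Mr M : Finset (ConnIdeal P)) :
    Finset (ConnIdeal P) :=
  Mr.filter (fun J => ∃ i ∈ DesMr P Mr M, J.1 \ mu P M J.1 = {i})

/-- The relation `le` is (the order relation of) a `P`-forest: a partial order
whose Hasse diagram is a forest, all of whose principal order ideals are
connected order ideals of `P`, and such that for incomparable `i, j` the union
`Λ_i ∪ Λ_j` is a disconnected order ideal of `P`. -/
structure IsPForestRel (P : PartialOrder (Fin n)) (le : Fin n → Fin n → Prop) : Prop where
  refl : ∀ i, le i i
  trans : ∀ i j k, le i j → le j k → le i k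
  antisymm : ∀ i j, le i j → le j i → i = j
  forest : ∀ i j k, CovRel le i j → CovRel le i k → j = k
  connIdeal : ∀ i, IsConnIdeal P (LamRel le i)
  disc : ∀ i j : Fin n, ¬ le i j → ¬ le j i →
    IsIdeal P (LamRel le i ∪ LamRel le j) ∧ ¬ JConn P (LamRel le i ∪ LamRel le j)

/-- The principal order ideal `Λ_i^P` of `P`. -/
def PIdeal (P : PartialOrder (Fin n)) (i : Fin n) : Finset (Fin n) :=
  Finset.univ.filter (fun k => P.le k i)

/-- The generating set `gs(J)`: the maximal elements of `J` with respect to `P`. -/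
def gsJ (P : PartialOrder (Fin n)) (J : Finset (Fin n)) : Finset (Fin n) :=
  J.filter (fun i => ∀ j ∈ J, ¬ P.lt i j)

/-- `P` is naturally labeled. -/
def NatLabeled (P : PartialOrder (Fin n)) : Prop :=
  ∀ i j : Fin n, P.lt i j → i < j

/-- `U_max(M, J)`: the maximal members of `U(M,J) = {J' ∈ M : J' ⊊ J}`. -/
def Umax (P : PartialOrder (Fin n)) (M : Finset (ConnIdeal P)) (J : Finset (Fin n)) :
    Finset (ConnIdeal P) :=
  (M.filter (fun Ja => Ja.1 ⊂ J)).filter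
    (fun Ja => ∀ Jb ∈ M, Jb.1 ⊂ J → Jb ≠ Ja → ¬ Ja.1 ⊂ Jb.1)

/-- The set of vertices of `G_P` which are principal order ideals of `P`. -/
def PIdealSet (P : PartialOrder (Fin n)) : Set (ConnIdeal P) :=
  {A : ConnIdeal P | ∃ i : Fin n, A.1 = PIdeal P i}

/-- The graph `H_P`: the subgraph of `G_P` induced by the principal order ideals. -/
def HP (P : PartialOrder (Fin n)) : SimpleGraph (PIdealSet P) :=
  (GP P).induce (PIdealSet P)

/-- `f` is a `P`-partition. -/
def IsPPartition (P : PartialOrder (Fin n)) (f : Fin n → ℕ) : Prop :=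
  (∀ i j : Fin n, P.lt i j → f j ≤ f i) ∧
  (∀ i j : Fin n, P.lt i j → j < i → f j < f i)

/-- The monomial `∏_{k ∈ J} x_k`. -/
def xJ (J : Finset (Fin n)) : MvPowerSeries (Fin n) ℚ :=
  ∏ k ∈ J, MvPowerSeries.X k

/-- The set of linear extensions of `P`, viewed as permutations `w` of `Fin n`
(in positions `0, …, n-1`) such that `i < j` whenever `w i <_P w j`. -/
def LinExts (P : PartialOrder (Fin n)) : Finset (Equiv.Perm (Fin n)) :=
  Finset.univ.filter (fun w => ∀ i j : Fin n, P.lt (w i) (w j) → i < j)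

/-- The major index of a permutation (with 1-indexed positions). -/
def maj (w : Equiv.Perm (Fin n)) : ℕ :=
  ∑ i ∈ Finset.univ.filter
      (fun i : Fin n => ∃ h : (i : ℕ) + 1 < n, w ⟨(i : ℕ) + 1, h⟩ < w i),
    ((i : ℕ) + 1)

/-- The finset of maximum independent sets of the connected component `c` of `G_P`. -/
def MaxIndepsOn (P : PartialOrder (Fin n)) (c : (GP P).ConnectedComponent) :
    Finset (Finset (ConnIdeal P)) :=
  Finset.univ.filter (fun Mr : Finset (ConnIdeal P) => IsMaxIndepOn (GP P) c.supp Mr)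

variable {P : PartialOrder (Fin n)}

-- Reachability in `(compGraph P).induce S`, phrased on `Fin n` rather than on the subtype.
def CompStep (P : PartialOrder (Fin n)) (S : Finset (Fin n)) (x y : Fin n) : Prop :=
  x ∈ S ∧ y ∈ S ∧ x ≠ y ∧ (P.le x y ∨ P.le y x)

def CompReach (P : PartialOrder (Fin n)) (S : Finset (Fin n)) : Fin n → Fin n → Prop :=
  Relation.ReflTransGen (CompStep P S)

section Connectivity

variable {S T : Finset (Fin n)} {a b x : Fin n}

theorem CompStep.symm (h : CompStep P S a b) : CompStep P S b a :=
  ⟨h.2.1, h.1, h.2.2.1.symm, h.2.2.2.symm⟩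

theorem CompReach.symm (h : CompReach P S a b) : CompReach P S b a :=
  Relation.ReflTransGen.mono (fun _ _ => CompStep.symm) _ _ h.swap

theorem CompReach.mono (hST : S ⊆ T) (h : CompReach P S a b) : CompReach P T a b :=
  Relation.ReflTransGen.mono (fun _ _ h => ⟨hST h.1, hST h.2.1, h.2.2⟩) _ _ h

theorem CompReach.mem_of_closed (hT : ∀ a ∈ T, ∀ b, CompStep P S a b → b ∈ T)
    (h : CompReach P S a b) (ha : a ∈ T) : b ∈ T := by
  induction h with
  | refl => exact ha
  | tail _ hstep ih => exact hT _ ih _ hstep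

theorem JConn.nonempty (h : JConn P S) : S.Nonempty := by
  obtain ⟨⟨v, hv⟩⟩ := SimpleGraph.Connected.nonempty h
  exact ⟨v, hv⟩

theorem JConn.compReach (h : JConn P S) (ha : a ∈ S) (hb : b ∈ S) : CompReach P S a b := by
  obtain ⟨w⟩ := h.preconnected ⟨a, ha⟩ ⟨b, hb⟩
  suffices ∀ u v : (S : Set (Fin n)), ((compGraph P).induce S).Walk u v →
      CompReach P S u v from this _ _ w
  intro u v w
  induction w with
  | nil => exact .refl
  | @cons u v _ hadj _ ih => exact .head ⟨u.2, v.2, hadj.1, hadj.2⟩ ih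

theorem jConn_of_compReach (hx : x ∈ S) (h : ∀ a ∈ S, CompReach P S a x) : JConn P S := by
  have : Nonempty (S : Set (Fin n)) := ⟨⟨x, hx⟩⟩
  have key : ∀ a b, CompReach P S a b → ∀ (ha : a ∈ S) (hb : b ∈ S),
      ((compGraph P).induce S).Reachable ⟨a, ha⟩ ⟨b, hb⟩ := by
    intro a b hab
    induction hab with
    | refl => exact fun _ _ => .rfl
    | @tail c d _ hcd ih =>
      have hadj : ((compGraph P).induce S).Adj ⟨c, hcd.1⟩ ⟨d, hcd.2.1⟩ := hcd.2.2
      exact fun ha _ => (ih ha hcd.1).trans hadj.reachable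
  exact .mk fun a b => (key _ _ (h a a.2) a.2 hx).trans (key _ _ (h b b.2) b.2 hx).symm

theorem JConn.union_biUnion {ι : Type*} {F : Finset ι} {f : ι → Finset (Fin n)}
    (hS : JConn P S) (hF : ∀ i ∈ F, JConn P (f i)) (hmeet : ∀ i ∈ F, ¬ Disjoint (f i) S) :
    JConn P (S ∪ F.biUnion f) := by
  obtain ⟨x, hx⟩ := hS.nonempty
  refine jConn_of_compReach (mem_union_left _ hx) fun a ha => ?_
  rcases mem_union.1 ha with haS | haF
  · exact (hS.compReach haS hx).mono subset_union_left
  · obtain ⟨i, hi, hai⟩ := mem_biUnion.1 haF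
    obtain ⟨y, hyi, hyS⟩ := not_disjoint_iff.1 (hmeet i hi)
    have hfi : f i ⊆ S ∪ F.biUnion f := (subset_biUnion_of_mem f hi).trans subset_union_right
    exact ((hF i hi).compReach hai hyi).mono hfi |>.trans
      ((hS.compReach hyS hx).mono subset_union_left)

theorem JConn.union (hS : JConn P S) (hT : JConn P T) (hST : ¬ Disjoint S T) :
    JConn P (S ∪ T) := by
  simpa using hS.union_biUnion (F := {T}) (f := id) (by simpa using hT)
    (by simpa [disjoint_comm] using hST)

theorem JConn.exists_le_of_ssubset (hT : JConn P T) (hS : IsIdeal P S) (hSne : S.Nonempty)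
    (hST : S ⊂ T) : ∃ v ∈ S, ∃ u ∈ T, u ∉ S ∧ P.le v u := by
  obtain ⟨s, hs⟩ := hSne
  obtain ⟨t, ht, htS⟩ := not_subset.1 (not_subset_of_ssubset hST)
  -- the first step out of `S` along a path from `s` to `t` inside `T`
  induction hT.compReach (hST.1 hs) ht with
  | refl => exact absurd hs htS
  | @tail c d _ hcd ih =>
    by_cases hc : c ∈ S
    · exact ⟨c, hc, d, hcd.2.1, htS, hcd.2.2.2.resolve_right fun h => htS (hS c hc d h)⟩
    · exact ih hcd.1 hc

end Connectivity

section Ideals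

variable {S T : Finset (Fin n)} {a b v x y : Fin n}

theorem IsIdeal.union (hS : IsIdeal P S) (hT : IsIdeal P T) : IsIdeal P (S ∪ T) := by
  intro i hi j hji
  rcases mem_union.1 hi with h | h
  · exact mem_union_left _ (hS i h j hji)
  · exact mem_union_right _ (hT i h j hji)

theorem IsIdeal.biUnion {ι : Type*} {F : Finset ι} {f : ι → Finset (Fin n)}
    (hF : ∀ i ∈ F, IsIdeal P (f i)) : IsIdeal P (F.biUnion f) := by
  intro a ha j hja
  obtain ⟨i, hi, hai⟩ := mem_biUnion.1 ha
  exact mem_biUnion.2 ⟨i, hi, hF i hi a hai j hja⟩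

theorem IsIdeal.erase (hS : IsIdeal P S) (hx : x ∈ gsJ P S) : IsIdeal P (S.erase x) := by
  intro i hi j hji
  obtain ⟨hix, hiS⟩ := mem_erase.1 hi
  refine mem_erase.2 ⟨?_, hS i hiS j hji⟩
  rintro rfl
  exact (mem_filter.1 hx).2 i hiS (@lt_of_le_of_ne _ P _ _ hji hix.symm)

theorem mem_pIdeal : a ∈ PIdeal P x ↔ P.le a x := by
  simp [PIdeal]

theorem pIdeal_ssubset_pIdeal (h : P.lt x y) : PIdeal P x ⊂ PIdeal P y := by
  obtain ⟨hxy, hyx⟩ := (P.lt_iff_le_not_ge x y).1 h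
  refine (ssubset_iff_of_subset fun z hz => ?_).2 ⟨y, mem_pIdeal.2 (P.le_refl y), ?_⟩
  · exact mem_pIdeal.2 (P.le_trans _ _ _ (mem_pIdeal.1 hz) hxy)
  · exact fun h => hyx (mem_pIdeal.1 h)

theorem gsJ_nonempty (hS : S.Nonempty) : (gsJ P S).Nonempty := by
  obtain ⟨x, hxS, hx⟩ := S.exists_max_image (fun x => (PIdeal P x).card) hS
  exact ⟨x, mem_filter.2 ⟨hxS, fun y hyS hxy =>
    (hx y hyS).not_gt (card_lt_card (pIdeal_ssubset_pIdeal hxy))⟩⟩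

theorem isConnIdeal_pIdeal (x : Fin n) : IsConnIdeal P (PIdeal P x) := by
  have hx : x ∈ PIdeal P x := mem_pIdeal.2 (P.le_refl x)
  refine ⟨fun a ha j hja => mem_pIdeal.2 (P.le_trans _ _ _ hja (mem_pIdeal.1 ha)),
    jConn_of_compReach hx fun a ha => ?_⟩
  rcases eq_or_ne a x with rfl | hne
  · exact .refl
  · exact .single ⟨ha, hx, hne, Or.inl (mem_pIdeal.1 ha)⟩

def component (P : PartialOrder (Fin n)) (S : Finset (Fin n)) (v : Fin n) : Finset (Fin n) :=
  S.filter (CompReach P S v)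

theorem mem_component : a ∈ component P S v ↔ a ∈ S ∧ CompReach P S v a :=
  mem_filter

theorem self_mem_component (hv : v ∈ S) : v ∈ component P S v :=
  mem_component.2 ⟨hv, .refl⟩

theorem component_subset : component P S v ⊆ S :=
  filter_subset _ _

theorem compReach_component (ha : a ∈ component P S v) : CompReach P (component P S v) v a := by
  obtain ⟨-, hva⟩ := mem_component.1 ha
  induction hva with
  | refl => exact .refl
  | @tail c d hvc hcd ih =>
    have hc : c ∈ component P S v := mem_component.2 ⟨hcd.1, hvc⟩
    exact (ih hc).tail ⟨hc, mem_component.2 ⟨hcd.2.1, hvc.tail hcd⟩, hcd.2.2⟩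

theorem subset_component (hTS : T ⊆ S) (hT : JConn P T) (haT : a ∈ T)
    (ha : a ∈ component P S v) : T ⊆ component P S v := fun _ hb =>
  mem_component.2 ⟨hTS hb, (mem_component.1 ha).2.trans ((hT.compReach haT hb).mono hTS)⟩

theorem isConnIdeal_component (hS : IsIdeal P S) (hv : v ∈ S) :
    IsConnIdeal P (component P S v) := by
  refine ⟨fun a ha j hja => ?_,
    jConn_of_compReach (self_mem_component hv) fun a ha => (compReach_component ha).symm⟩
  obtain ⟨haS, hva⟩ := mem_component.1 ha
  rcases eq_or_ne j a with rfl | hne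
  · exact ha
  · have hjS := hS a haS j hja
    exact mem_component.2 ⟨hjS, hva.tail ⟨haS, hjS, hne.symm, Or.inr hja⟩⟩

end Ideals

theorem IsMaxIndep.mem_of_forall_not_adj {V : Type*} {G : SimpleGraph V} {s : Finset V}
    (hs : IsMaxIndep G s) {v : V} (hv : ∀ w ∈ s, ¬ G.Adj v w) : v ∈ s := by
  by_contra hvs
  have hind : IsIndep G (insert v s) := by
    intro a ha b hb
    rcases mem_insert.1 ha with rfl | has
    · rcases mem_insert.1 hb with rfl | hbs
      · exact G.loopless.irrefl _
      · exact hv b hbs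
    · rcases mem_insert.1 hb with rfl | hbs
      · exact fun hab => hv a has hab.symm
      · exact hs.1 a has b hbs
  have := hs.2 _ hind
  rw [card_insert_of_notMem hvs] at this
  omega

section GraphGP

variable {A B K : ConnIdeal P}

theorem gp_not_adj_iff :
    ¬ (GP P).Adj A B ↔ Disjoint A.1 B.1 ∨ A.1 ⊆ B.1 ∨ B.1 ⊆ A.1 := by
  change ¬ Nontriv A.1 B.1 ↔ _
  rw [Nontriv, ← not_disjoint_iff_nonempty_inter]
  tauto

theorem ConnIdeal.nonempty (A : ConnIdeal P) : A.1.Nonempty :=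
  A.2.2.nonempty

theorem subset_of_reachable_of_not_reachable (hAK : A.1 ⊆ K.1) (hnr : ¬ (GP P).Reachable A K)
    (hAB : (GP P).Reachable A B) : B.1 ⊆ K.1 := by
  obtain ⟨w⟩ := hAB
  induction w with
  | nil => exact hAK
  | @cons A C B hadj _ ih =>
    have hnrC : ¬ (GP P).Reachable C K := fun h => hnr (hadj.reachable.trans h)
    refine ih ?_ hnrC
    rcases gp_not_adj_iff.1 fun h => hnrC h.reachable with hdisj | hsub | hsup
    · obtain ⟨x, hx⟩ := hadj.1
      exact absurd (hAK (mem_inter.1 hx).1) (disjoint_left.1 hdisj (mem_inter.1 hx).2)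
    · exact hsub
    · exact absurd (hAK.trans hsup) hadj.2.1

theorem IsIndep.laminar {M : Finset (ConnIdeal P)} (hM : IsIndep (GP P) M) (hA : A ∈ M)
    (hB : B ∈ M) : Disjoint A.1 B.1 ∨ A.1 ⊆ B.1 ∨ B.1 ⊆ A.1 :=
  gp_not_adj_iff.1 (hM A hA B hB)

end GraphGP

section Labels

variable {M : Finset (ConnIdeal P)} {J Z : ConnIdeal P} {I : Finset (Fin n)} {w x y : Fin n}

theorem mem_mu : y ∈ mu P M I ↔ ∃ Z ∈ M, Z.1 ⊂ I ∧ y ∈ Z.1 := by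
  simp only [mu, mem_biUnion, mem_filter, and_assoc]

theorem subset_mu (hZ : Z ∈ M) (hZI : Z.1 ⊂ I) : Z.1 ⊆ mu P M I :=
  fun _ hy => mem_mu.2 ⟨Z, hZ, hZI, hy⟩

theorem subset_erase_of_not_mem_mu (hZ : Z ∈ M) (hZI : Z.1 ⊂ I) (hx : x ∉ mu P M I) :
    Z.1 ⊆ I.erase x := fun _ hy =>
  mem_erase.2 ⟨fun hyx => hx (hyx ▸ subset_mu hZ hZI hy), hZI.1 hy⟩

theorem sdiff_mu_nonempty (hM : IsIndep (GP P) M) (J : ConnIdeal P) :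
    (J.1 \ mu P M J.1).Nonempty := by
  rw [sdiff_nonempty]
  intro hsub
  obtain ⟨v, hv⟩ := J.nonempty
  -- the largest member of `M` strictly inside `J` through `v` would have to be all of `J`
  obtain ⟨Z₀, hZ₀, hmax⟩ := (M.filter fun Z => Z.1 ⊂ J.1 ∧ v ∈ Z.1).exists_max_image
    (fun Z => Z.1.card) (by
      obtain ⟨Z, hZ, hZJ, hvZ⟩ := mem_mu.1 (hsub hv)
      exact ⟨Z, mem_filter.2 ⟨hZ, hZJ, hvZ⟩⟩)
  obtain ⟨hZ₀M, hZ₀J, hvZ₀⟩ := mem_filter.1 hZ₀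
  have hclosed : ∀ a ∈ Z₀.1, ∀ b, CompStep P J.1 a b → b ∈ Z₀.1 := by
    intro a ha b hab
    obtain ⟨Z₁, hZ₁M, hZ₁J, hbZ₁⟩ := mem_mu.1 (hsub hab.2.1)
    rcases hab.2.2.2 with hle | hle
    · rcases hM.laminar hZ₀M hZ₁M with hdisj | hsub₁ | hsup₁
      · exact absurd (Z₁.2.1 b hbZ₁ a hle) (disjoint_left.1 hdisj ha)
      · have hZ₁ : Z₁ ∈ M.filter fun Z => Z.1 ⊂ J.1 ∧ v ∈ Z.1 :=
          mem_filter.2 ⟨hZ₁M, hZ₁J, hsub₁ hvZ₀⟩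
        rwa [eq_of_subset_of_card_le hsub₁ (hmax Z₁ hZ₁)]
      · exact hsup₁ hbZ₁
    · exact Z₀.2.1 a ha b hle
  exact not_subset_of_ssubset hZ₀J fun b hb =>
    (J.2.2.compReach hv hb).mem_of_closed hclosed hvZ₀

theorem exists_mem_eq_component (hM : IsMaxIndep (GP P) M) (hJ : J ∈ M)
    (hxmu : x ∉ mu P M J.1) (hx : x ∈ gsJ P J.1) (hw : w ∈ J.1.erase x) :
    ∃ Z ∈ M, Z.1 = component P (J.1.erase x) w := by
  let D : ConnIdeal P := ⟨_, isConnIdeal_component (J.2.1.erase hx) hw⟩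
  have hDJ : D.1 ⊆ J.1 := component_subset.trans (erase_subset _ _)
  refine ⟨D, hM.mem_of_forall_not_adj fun Z hZ => gp_not_adj_iff.2 ?_, rfl⟩
  rcases hM.1.laminar hJ hZ with hdisj | hJZ | hZJ
  · exact Or.inl (hdisj.mono_left hDJ)
  · exact Or.inr (Or.inl (hDJ.trans hJZ))
  rcases eq_or_ne Z.1 J.1 with heq | hne
  · exact Or.inr (Or.inl (heq ▸ hDJ))
  by_cases hdisj : Disjoint D.1 Z.1
  · exact Or.inl hdisj
  obtain ⟨a, haD, haZ⟩ := not_disjoint_iff.1 hdisj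
  have hZx := subset_erase_of_not_mem_mu hZ (Finset.ssubset_iff_subset_ne.2 ⟨hZJ, hne⟩) hxmu
  exact Or.inr (Or.inr (subset_component hZx Z.2.2 haZ haD))

theorem exists_label (hM : IsMaxIndep (GP P) M) (hJ : J ∈ M) :
    ∃ x ∈ gsJ P J.1, J.1 \ mu P M J.1 = {x} := by
  obtain ⟨x, hx⟩ := gsJ_nonempty (sdiff_mu_nonempty hM.1 J)
  obtain ⟨hxJmu, hxmax⟩ := mem_filter.1 hx
  obtain ⟨hxJ, hxmu⟩ := mem_sdiff.1 hxJmu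
  -- anything above `x` in `J` lies in the ideal `μ(M,J)`, and then so would `x`
  have hxgs : x ∈ gsJ P J.1 := by
    refine mem_filter.2 ⟨hxJ, fun y hy hxy => ?_⟩
    by_cases hymu : y ∈ mu P M J.1
    · obtain ⟨Z, hZ, hZJ, hyZ⟩ := mem_mu.1 hymu
      exact hxmu (subset_mu hZ hZJ (Z.2.1 y hyZ x (@le_of_lt _ P.toPreorder _ _ hxy)))
    · exact hxmax y (mem_sdiff.2 ⟨hy, hymu⟩) hxy
  refine ⟨x, hxgs, eq_singleton_iff_unique_mem.2 ⟨hxJmu, fun w hw => ?_⟩⟩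
  obtain ⟨hwJ, hwmu⟩ := mem_sdiff.1 hw
  by_contra hwx
  have hw' : w ∈ J.1.erase x := mem_erase.2 ⟨hwx, hwJ⟩
  obtain ⟨Z, hZ, hZeq⟩ := exists_mem_eq_component hM hJ hxmu hxgs hw'
  have hZJ : Z.1 ⊂ J.1 :=
    Finset.ssubset_of_subset_of_ssubset (hZeq ▸ component_subset) (erase_ssubset hxJ)
  exact hwmu (subset_mu hZ hZJ (hZeq ▸ self_mem_component hw'))

theorem label_mem (h : J.1 \ mu P M J.1 = {x}) : x ∈ J.1 ∧ x ∉ mu P M J.1 :=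
  mem_sdiff.1 (h ▸ mem_singleton_self x)

theorem label_mem_gsJ (hM : IsMaxIndep (GP P) M) (hJ : J ∈ M) (h : J.1 \ mu P M J.1 = {x}) :
    x ∈ gsJ P J.1 := by
  obtain ⟨y, hy, hJy⟩ := exists_label hM hJ
  rwa [singleton_injective (h.symm.trans hJy)]

theorem eq_of_label_eq (hM : IsMaxIndep (GP P) M) (hJ : J ∈ M) (hZ : Z ∈ M)
    (hJx : J.1 \ mu P M J.1 = {x}) (hZx : Z.1 \ mu P M Z.1 = {x}) : J = Z := by
  obtain ⟨hxJ, hxJmu⟩ := label_mem hJx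
  obtain ⟨hxZ, hxZmu⟩ := label_mem hZx
  by_contra hne
  have hne' : J.1 ≠ Z.1 := fun h => hne (Subtype.ext h)
  rcases hM.1.laminar hJ hZ with hdisj | hJZ | hZJ
  · exact disjoint_left.1 hdisj hxJ hxZ
  · exact hxZmu (subset_mu hJ (Finset.ssubset_iff_subset_ne.2 ⟨hJZ, hne'⟩) hxJ)
  · exact hxJmu (subset_mu hZ (Finset.ssubset_iff_subset_ne.2 ⟨hZJ, hne'.symm⟩) hxZ)

end Labels

def saturation (M : Finset (ConnIdeal P)) (U K : Finset (Fin n)) : Finset (Fin n) :=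
  K ∪ (M.filter fun Z => Z.1 ⊆ U ∧ ¬ Disjoint Z.1 K).biUnion Subtype.val

section Saturation

variable {M : Finset (ConnIdeal P)} {U K : Finset (Fin n)} {Z : ConnIdeal P} {a : Fin n}

theorem mem_saturation : a ∈ saturation M U K ↔
    a ∈ K ∨ ∃ Z ∈ M, Z.1 ⊆ U ∧ ¬ Disjoint Z.1 K ∧ a ∈ Z.1 := by
  simp only [saturation, mem_union, mem_biUnion, mem_filter, and_assoc]

theorem subset_saturation_left : K ⊆ saturation M U K :=
  subset_union_left

theorem subset_saturation (hZ : Z ∈ M) (hZU : Z.1 ⊆ U) (hZK : ¬ Disjoint Z.1 K) :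
    Z.1 ⊆ saturation M U K :=
  fun _ ha => mem_saturation.2 (Or.inr ⟨Z, hZ, hZU, hZK, ha⟩)

theorem isConnIdeal_saturation (hK : IsConnIdeal P K) : IsConnIdeal P (saturation M U K) :=
  ⟨hK.1.union (IsIdeal.biUnion fun Z _ => Z.2.1),
    hK.2.union_biUnion (fun Z _ => Z.2.2) fun _ hZ => (mem_filter.1 hZ).2.2⟩

theorem subset_or_disjoint_saturation (hM : IsIndep (GP P) M) (hZ : Z ∈ M) (hZU : Z.1 ⊆ U) :
    Z.1 ⊆ saturation M U K ∨ Disjoint Z.1 (saturation M U K) := by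
  by_cases hZK : Disjoint Z.1 K
  swap
  · exact Or.inl (subset_saturation hZ hZU hZK)
  by_cases hdisj : Disjoint Z.1 (saturation M U K)
  · exact Or.inr hdisj
  obtain ⟨y, hyZ, hy⟩ := not_disjoint_iff.1 hdisj
  rcases mem_saturation.1 hy with hyK | ⟨Z', hZ', hZ'U, hZ'K, hyZ'⟩
  · exact absurd hyK (disjoint_left.1 hZK hyZ)
  rcases hM.laminar hZ hZ' with hd | hZZ' | hZ'Z
  · exact absurd hyZ' (disjoint_left.1 hd hyZ)
  · exact Or.inl (hZZ'.trans (subset_saturation hZ' hZ'U hZ'K))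
  · exact absurd (hZK.mono_left hZ'Z) hZ'K

end Saturation

section Parents

variable {M : Finset (ConnIdeal P)} {J K Z p : ConnIdeal P} {u v x : Fin n}

theorem exists_mem_mem (hM : IsMaxIndep (GP P) M) (x : Fin n) : ∃ Z ∈ M, x ∈ Z.1 := by
  let I : ConnIdeal P :=
    ⟨saturation M univ (PIdeal P x), isConnIdeal_saturation (isConnIdeal_pIdeal x)⟩
  refine ⟨I, hM.mem_of_forall_not_adj fun Z hZ => gp_not_adj_iff.2 ?_,
    subset_saturation_left (mem_pIdeal.2 (P.le_refl x))⟩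
  rcases subset_or_disjoint_saturation hM.1 hZ (subset_univ _) with h | h
  · exact Or.inr (Or.inr h)
  · exact Or.inl h.symm

/-- `p ∈ M` is labelled by the parent in `F_M` of the label of `J`. -/
def IsParent (M : Finset (ConnIdeal P)) (J p : ConnIdeal P) : Prop :=
  p ∈ M ∧ J.1 ⊂ p.1 ∧ ∀ Z ∈ M, J.1 ⊂ Z.1 → p.1 ⊆ Z.1

theorem exists_isParent (hM : IsIndep (GP P) M) (h : ∃ Z ∈ M, J.1 ⊂ Z.1) :
    ∃ p, IsParent M J p := by
  obtain ⟨p, hp, hmin⟩ := (M.filter fun Z => J.1 ⊂ Z.1).exists_min_image (fun Z => Z.1.card)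
    (by obtain ⟨Z, hZ, hJZ⟩ := h; exact ⟨Z, mem_filter.2 ⟨hZ, hJZ⟩⟩)
  obtain ⟨hpM, hJp⟩ := mem_filter.1 hp
  refine ⟨p, hpM, hJp, fun Z hZ hJZ => ?_⟩
  obtain ⟨v, hv⟩ := J.nonempty
  rcases hM.laminar hpM hZ with hd | hpZ | hZp
  · exact absurd (hJZ.1 hv) (disjoint_left.1 hd (hJp.1 hv))
  · exact hpZ
  · rw [eq_of_subset_of_card_le hZp (hmin Z (mem_filter.2 ⟨hZ, hJZ⟩))]

theorem IsParent.eq_label_of_le (hM : IsMaxIndep (GP P) M) (hJ : J ∈ M) (hp : IsParent M J p)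
    (hx : p.1 \ mu P M p.1 = {x}) (hu : u ∈ p.1) (huJ : u ∉ J.1) (hv : v ∈ J.1)
    (hvu : P.le v u) : u = x := by
  by_contra hne
  obtain ⟨hxp, hxmu⟩ := label_mem hx
  have hu' : u ∈ p.1.erase x := mem_erase.2 ⟨hne, hu⟩
  have hv' : v ∈ p.1.erase x :=
    mem_erase.2 ⟨fun h => hxmu (subset_mu hJ hp.2.1 (h ▸ hv)), hp.2.1.1 hv⟩
  -- the piece of `p \ {x}` containing `u` is a member of `M` strictly between `J` and `p`
  obtain ⟨Z, hZ, hZeq⟩ := exists_mem_eq_component hM hp.1 hxmu (label_mem_gsJ hM hp.1 hx) hu'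
  have huZ : u ∈ Z.1 := hZeq ▸ self_mem_component hu'
  have hvZ : v ∈ Z.1 :=
    hZeq ▸ mem_component.2 ⟨hv', .single ⟨hu', hv', fun h => huJ (h ▸ hv), Or.inr hvu⟩⟩
  rcases hM.1.laminar hZ hJ with hd | hZJ | hJZ
  · exact disjoint_left.1 hd hvZ hv
  · exact huJ (hZJ huZ)
  · have hpZ := hp.2.2 Z hZ (Finset.ssubset_iff_subset_ne.2 ⟨hJZ, fun h => huJ (h ▸ huZ)⟩)
    exact (mem_erase.1 ((hZeq ▸ component_subset : Z.1 ⊆ p.1.erase x) (hpZ hxp))).1 rfl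

theorem exists_le_of_adj (hadj : (GP P).Adj J K) :
    ∃ v ∈ J.1, ∃ u ∈ K.1, u ∉ J.1 ∧ P.le v u := by
  have hJK : J.1 ⊂ J.1 ∪ K.1 := Finset.ssubset_iff_subset_ne.2
    ⟨subset_union_left, fun h => hadj.2.2 (subset_union_right.trans h.symm.subset)⟩
  obtain ⟨v, hv, u, hu, huJ, hvu⟩ := (J.2.2.union K.2.2
    (not_disjoint_iff_nonempty_inter.2 hadj.1)).exists_le_of_ssubset J.2.1 J.nonempty hJK
  exact ⟨v, hv, u, (mem_union.1 hu).resolve_left huJ, huJ, hvu⟩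

theorem exists_ssuperset_of_adj (hM : IsMaxIndep (GP P) M) (hJ : J ∈ M)
    (hadj : (GP P).Adj J K) : ∃ Z ∈ M, J.1 ⊂ Z.1 := by
  obtain ⟨v, hv, u, -, huJ, hvu⟩ := exists_le_of_adj hadj
  obtain ⟨Z, hZ, huZ⟩ := exists_mem_mem hM u
  rcases hM.1.laminar hJ hZ with hd | hJZ | hZJ
  · exact absurd (Z.2.1 u huZ v hvu) (disjoint_left.1 hd hv)
  · exact ⟨Z, hZ, Finset.ssubset_iff_subset_ne.2 ⟨hJZ, fun h => huJ (h ▸ huZ)⟩⟩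
  · exact absurd (hZJ huZ) huJ

end Parents

theorem SimpleGraph.Reachable.exists_adj_of_ne {V : Type*} {G : SimpleGraph V} {u v : V}
    (h : G.Reachable u v) (hne : u ≠ v) : ∃ w, G.Adj u w := by
  obtain ⟨w⟩ := h
  cases w with
  | nil => exact absurd rfl hne
  | cons hadj _ => exact ⟨_, hadj⟩

section Transfer

variable {M M₁ M₂ : Finset (ConnIdeal P)} {J K L p : ConnIdeal P} {i j u v x : Fin n}

theorem saturation_eq_of_label_mem (hM : IsMaxIndep (GP P) M) (hJ : J ∈ M)
    (hx : J.1 \ mu P M J.1 = {x}) (hxK : x ∈ K.1) (hKJ : K.1 ⊆ J.1) :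
    saturation M (J.1.erase x) K.1 = J.1 := by
  obtain ⟨-, hxmu⟩ := label_mem hx
  -- the saturation is a member of `M` inside `J` containing the label of `J`
  let I : ConnIdeal P := ⟨_, isConnIdeal_saturation (M := M) (U := J.1.erase x) K.2⟩
  have hIJ : I.1 ⊆ J.1 := union_subset hKJ
    (biUnion_subset.2 fun Z hZ => (mem_filter.1 hZ).2.1.trans (erase_subset _ _))
  have hIM : I ∈ M := by
    refine hM.mem_of_forall_not_adj fun Z hZ => gp_not_adj_iff.2 ?_
    rcases hM.1.laminar hZ hJ with hd | hZJ | hJZ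
    · exact Or.inl (hd.symm.mono_left hIJ)
    · rcases eq_or_ne Z.1 J.1 with heq | hne
      · exact Or.inr (Or.inl (heq ▸ hIJ))
      rcases subset_or_disjoint_saturation hM.1 hZ (subset_erase_of_not_mem_mu hZ
        (Finset.ssubset_iff_subset_ne.2 ⟨hZJ, hne⟩) hxmu) with h | h
      · exact Or.inr (Or.inr h)
      · exact Or.inl h.symm
    · exact Or.inr (Or.inl (hIJ.trans hJZ))
  by_contra hne
  exact hxmu (subset_mu hIM (Finset.ssubset_iff_subset_ne.2 ⟨hIJ, hne⟩)
    (subset_saturation_left hxK))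

theorem exists_reachable_of_label_mem (hM : IsMaxIndep (GP P) M) (hJ : J ∈ M)
    (hx : J.1 \ mu P M J.1 = {x}) (hxK : x ∈ K.1) (hKJ : K.1 ⊆ J.1) {w : Fin n}
    (hw : w ∈ J.1) :
    ∃ K' : ConnIdeal P, w ∈ K'.1 ∧ K'.1 ⊆ J.1 ∧ (GP P).Reachable K' K := by
  rw [← saturation_eq_of_label_mem hM hJ hx hxK hKJ, mem_saturation] at hw
  rcases hw with hwK | ⟨Z, -, hZU, hZK, hwZ⟩
  · exact ⟨K, hwK, hKJ, .rfl⟩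
  have hZJ : Z.1 ⊆ J.1 := hZU.trans (erase_subset _ _)
  by_cases hadj : (GP P).Adj Z K
  · exact ⟨Z, hwZ, hZJ, hadj.reachable⟩
  rcases gp_not_adj_iff.1 hadj with hd | hZK' | hKZ
  · exact absurd hd hZK
  · exact ⟨K, hZK' hwZ, hKJ, .rfl⟩
  · exact absurd (hZU (hKZ hxK)) (notMem_erase x J.1)

theorem reachable_of_label_mem (hM : IsMaxIndep (GP P) M) (hJ : J ∈ M)
    (hx : J.1 \ mu P M J.1 = {x}) (hxK : x ∈ K.1) (hKJ : K.1 ⊆ J.1) (hadj : (GP P).Adj J L) :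
    (GP P).Reachable K J := by
  -- `J` is covered by ideals reachable from `K`; the one through a point of `L` would be
  -- nested with `L`, and then so would be `J`
  by_contra hnr
  obtain ⟨y, hy⟩ := hadj.1
  obtain ⟨hyJ, hyL⟩ := mem_inter.1 hy
  obtain ⟨K', hyK', hK'J, hK'K⟩ := exists_reachable_of_label_mem hM hJ hx hxK hKJ hyJ
  have hnr' : ¬ (GP P).Reachable K' L :=
    fun h => hnr (hK'K.symm.trans (h.trans hadj.symm.reachable))
  rcases gp_not_adj_iff.1 fun h => hnr' h.reachable with hd | hK'L | hLK'
  · exact disjoint_left.1 hd hyK' hyL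
  · refine hadj.2.1 fun w hw => ?_
    obtain ⟨K'', hwK'', -, hK''K⟩ := exists_reachable_of_label_mem hM hJ hx hxK hKJ hw
    exact subset_of_reachable_of_not_reachable hK'L hnr' (hK'K.trans hK''K.symm) hwK''
  · exact hadj.2.2 (hLK'.trans hK'J)

theorem label_eq_of_agree (hM₂ : IsMaxIndep (GP P) M₂) (hJ₂ : J ∈ M₂)
    (hagree : ∀ Z, (GP P).Reachable Z J → (Z ∈ M₁ ↔ Z ∈ M₂)) (hadj : (GP P).Adj J L)
    (hi : J.1 \ mu P M₁ J.1 = {i}) (hj : J.1 \ mu P M₂ J.1 = {j}) : i = j := by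
  by_contra hne
  obtain ⟨hjJ, hjmu⟩ := label_mem hj
  have hjmu₁ : j ∈ mu P M₁ J.1 := by
    by_contra h
    have : j ∈ J.1 \ mu P M₁ J.1 := mem_sdiff.2 ⟨hjJ, h⟩
    exact hne (mem_singleton.1 (hi ▸ this)).symm
  obtain ⟨D, hD, hDJ, hjD⟩ := mem_mu.1 hjmu₁
  have hDJr := reachable_of_label_mem hM₂ hJ₂ hj hjD hDJ.1 hadj
  exact hjmu (subset_mu ((hagree D hDJr).1 hD) hDJ hjD)

theorem label_lt_of_isolated (hnat : NatLabeled P) (hM : IsMaxIndep (GP P) M) (hJ : J ∈ M)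
    (hiso : ∀ K, ¬ (GP P).Adj J K) (hp : IsParent M J p) (hi : J.1 \ mu P M J.1 = {i})
    (hj : p.1 \ mu P M p.1 = {j}) : i < j := by
  obtain ⟨hiJ, -⟩ := label_mem hi
  obtain ⟨-, hjmu⟩ := label_mem hj
  have hjJ : j ∉ J.1 := fun h => hjmu (subset_mu hJ hp.2.1 h)
  obtain ⟨v, hv, u, hu, huJ, hvu⟩ := p.2.2.exists_le_of_ssubset J.2.1 J.nonempty hp.2.1
  have hvj : P.le v j := hp.eq_label_of_le hM hJ hj hu huJ hv hvu ▸ hvu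
  -- `J` meets the principal ideal of `j` and does not contain `j`, so it lies inside it
  rcases gp_not_adj_iff.1 (hiso ⟨PIdeal P j, isConnIdeal_pIdeal j⟩) with hd | hJΛ | hΛJ
  · exact (disjoint_left.1 hd hv (mem_pIdeal.2 hvj)).elim
  · exact hnat i j (@lt_of_le_of_ne _ P _ _ (mem_pIdeal.1 (hJΛ hiJ)) fun h => hjJ (h ▸ hiJ))
  · exact absurd (hΛJ (mem_pIdeal.2 (P.le_refl j))) hjJ

theorem IsParent.unique (hp : IsParent M J p) (hq : IsParent M J K) : p = K :=
  Subtype.ext ((hp.2.2 K hq.1 hq.2.1).antisymm (hq.2.2 p hp.1 hp.2.1))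

theorem IsParent.of_agree (hp : IsParent M₁ J p) (hpJ : (GP P).Reachable p J)
    (hagree : ∀ Z, (GP P).Reachable Z J → (Z ∈ M₁ ↔ Z ∈ M₂)) : IsParent M₂ J p := by
  refine ⟨(hagree p hpJ).1 hp.1, hp.2.1, fun Z hZ hJZ => ?_⟩
  by_cases hZJ : (GP P).Reachable Z J
  · exact hp.2.2 Z ((hagree Z hZJ).2 hZ) hJZ
  · exact subset_of_reachable_of_not_reachable hJZ.1 (fun h => hZJ h.symm) hpJ.symm

/-- A parent outside the component of `J` contains every neighbour of `J`. -/
theorem IsParent.label_eq_of_not_reachable (hM : IsMaxIndep (GP P) M) (hJ : J ∈ M)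
    (hp : IsParent M J p) (hpJ : ¬ (GP P).Reachable p J) (hadj : (GP P).Adj J L)
    (hv : v ∈ J.1) (huL : u ∈ L.1) (huJ : u ∉ J.1) (hvu : P.le v u)
    (hj : p.1 \ mu P M p.1 = {j}) : u = j :=
  hp.eq_label_of_le hM hJ hj (subset_of_reachable_of_not_reachable hp.2.1.1
    (fun h => hpJ h.symm) hadj.reachable huL) huJ hv hvu

theorem exists_parent_label_eq (hM₁ : IsMaxIndep (GP P) M₁) (hM₂ : IsMaxIndep (GP P) M₂)
    (hJ₁ : J ∈ M₁) (hJ₂ : J ∈ M₂)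
    (hagree : ∀ Z, (GP P).Reachable Z J → (Z ∈ M₁ ↔ Z ∈ M₂)) (hadj : (GP P).Adj J L)
    (hp : IsParent M₁ J p) (hj : p.1 \ mu P M₁ p.1 = {j}) :
    ∃ q, IsParent M₂ J q ∧ q.1 \ mu P M₂ q.1 = {j} := by
  by_cases hpJ : (GP P).Reachable p J
  · have hq := hp.of_agree hpJ hagree
    obtain ⟨C, hC⟩ := hpJ.exists_adj_of_ne fun h => hp.2.1.ne (congrArg Subtype.val h).symm
    obtain ⟨j₂, -, hj₂⟩ := exists_label hM₂ hq.1
    have hagree' : ∀ Z, (GP P).Reachable Z p → (Z ∈ M₁ ↔ Z ∈ M₂) :=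
      fun Z hZ => hagree Z (hZ.trans hpJ)
    exact ⟨p, hq, label_eq_of_agree hM₂ hq.1 hagree' hC hj hj₂ ▸ hj₂⟩
  obtain ⟨Z, hZ, hJZ⟩ := exists_ssuperset_of_adj hM₂ hJ₂ hadj
  obtain ⟨q, hq⟩ := exists_isParent hM₂.1 ⟨Z, hZ, hJZ⟩
  have hqJ : ¬ (GP P).Reachable q J := fun h =>
    hpJ (hp.unique (hq.of_agree h fun Z hZ => (hagree Z hZ).symm) ▸ h)
  obtain ⟨j₂, -, hj₂⟩ := exists_label hM₂ hq.1
  obtain ⟨v, hv, u, huL, huJ, hvu⟩ := exists_le_of_adj hadj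
  have e₁ := hp.label_eq_of_not_reachable hM₁ hJ₁ hpJ hadj hv huL huJ hvu hj
  have e₂ := hq.label_eq_of_not_reachable hM₂ hJ₂ hqJ hadj hv huL huJ hvu hj₂
  exact ⟨q, hq, e₁ ▸ e₂ ▸ hj₂⟩

end Transfer

/-- `i ∈ Des(M)`, witnessed by the member `J` of `M` labelled `i`. -/
def IsDescentAt (M : Finset (ConnIdeal P)) (J : ConnIdeal P) (i : Fin n) : Prop :=
  J.1 \ mu P M J.1 = {i} ∧ ∃ p j, IsParent M J p ∧ p.1 \ mu P M p.1 = {j} ∧ j < i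

section Descents

variable {M M₁ M₂ Mr : Finset (ConnIdeal P)} {J : ConnIdeal P} {i j : Fin n}

theorem IsDescentAt.of_agree (hnat : NatLabeled P) (hM₁ : IsMaxIndep (GP P) M₁)
    (hM₂ : IsMaxIndep (GP P) M₂) (hJ₁ : J ∈ M₁) (hJ₂ : J ∈ M₂)
    (hagree : ∀ Z, (GP P).Reachable Z J → (Z ∈ M₁ ↔ Z ∈ M₂))
    (h : IsDescentAt M₁ J i) : IsDescentAt M₂ J i := by
  obtain ⟨hi, p, j, hp, hj, hji⟩ := h
  by_cases hadj : ∃ L, (GP P).Adj J L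
  · obtain ⟨L, hadj⟩ := hadj
    obtain ⟨i₂, -, hi₂⟩ := exists_label hM₂ hJ₂
    obtain ⟨q, hq, hqj⟩ := exists_parent_label_eq hM₁ hM₂ hJ₁ hJ₂ hagree hadj hp hj
    exact ⟨label_eq_of_agree hM₂ hJ₂ hagree hadj hi hi₂ ▸ hi₂, q, j, hq, hqj, hji⟩
  · have hij := label_lt_of_isolated hnat hM₁ hJ₁ (not_exists.1 hadj) hp hi hj
    omega

theorem ltRel_fMle_iff (hM : IsMaxIndep (GP P) M) : ltRel (FMle P M) i j ↔ FMlt P M i j := by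
  refine ⟨fun ⟨hle, hne⟩ => hle.resolve_left hne, fun h => ⟨Or.inr h, ?_⟩⟩
  rintro rfl
  obtain ⟨Ja, hJa, Jb, hJb, ha, hb, hab⟩ := h
  exact hab.ne (congrArg Subtype.val (eq_of_label_eq hM hJa hJb ha hb))

theorem covRel_fMle_iff (hM : IsMaxIndep (GP P) M) :
    CovRel (FMle P M) i j ↔ ∃ J ∈ M, ∃ p, J.1 \ mu P M J.1 = {i} ∧ IsParent M J p ∧
      p.1 \ mu P M p.1 = {j} := by
  simp only [CovRel, ltRel_fMle_iff hM]
  constructor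
  · rintro ⟨⟨J, hJ, Z, hZ, hi, hj, hJZ⟩, hcov⟩
    obtain ⟨p, hp⟩ := exists_isParent hM.1 ⟨Z, hZ, hJZ⟩
    obtain ⟨k, -, hk⟩ := exists_label hM hp.1
    refine ⟨J, hJ, p, hi, hp, ?_⟩
    rcases eq_or_ne p.1 Z.1 with hpZ | hpZ
    · rwa [hpZ]
    -- otherwise the label of `p` lies strictly between `i` and `j` in `F_M`
    have hpZ' : p.1 ⊂ Z.1 := Finset.ssubset_iff_subset_ne.2 ⟨hp.2.2 Z hZ hJZ, hpZ⟩
    exact absurd ⟨p, hp.1, Z, hZ, hk, hj, hpZ'⟩ (hcov k ⟨J, hJ, p, hp.1, hi, hk, hp.2.1⟩)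
  · rintro ⟨J, hJ, p, hi, hp, hj⟩
    refine ⟨⟨J, hJ, p, hp.1, hi, hj, hp.2.1⟩, ?_⟩
    rintro k ⟨J', hJ', Z, hZ, hi', hk, hJ'Z⟩ ⟨Z', hZ', p', hp', hk', hj', hZ'p'⟩
    obtain rfl := eq_of_label_eq hM hJ' hJ hi' hi
    obtain rfl := eq_of_label_eq hM hZ' hZ hk' hk
    obtain rfl := eq_of_label_eq hM hp' hp.1 hj' hj
    exact not_subset_of_ssubset hZ'p' (hp.2.2 Z' hZ' hJ'Z)

theorem mem_desM_iff (hM : IsMaxIndep (GP P) M) :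
    i ∈ DesM P M ↔ ∃ J ∈ M, IsDescentAt M J i := by
  simp only [DesM, DesRel, mem_filter, mem_univ, true_and, covRel_fMle_iff hM]
  constructor
  · rintro ⟨j, ⟨J, hJ, p, hi, hp, hj⟩, hji⟩
    exact ⟨J, hJ, hi, p, j, hp, hj, hji⟩
  · rintro ⟨J, hJ, hi, p, j, hp, hj, hji⟩
    exact ⟨j, ⟨J, hJ, p, hi, hp, hj⟩, hji⟩

theorem mem_desMr_iff (hM : IsMaxIndep (GP P) M) (hMr : Mr ⊆ M) :
    i ∈ DesMr P Mr M ↔ ∃ J ∈ Mr, IsDescentAt M J i := by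
  rw [DesMr, mem_filter, mem_desM_iff hM]
  constructor
  · rintro ⟨⟨J', hJ', hdes⟩, J, hJ, hi⟩
    exact ⟨J, hJ, eq_of_label_eq hM hJ' (hMr hJ) hdes.1 hi ▸ hdes⟩
  · rintro ⟨J, hJ, hdes⟩
    exact ⟨⟨J, hMr hJ, hdes⟩, J, hJ, hdes.1⟩

theorem mem_desBarMr_iff (hM : IsMaxIndep (GP P) M) (hMr : Mr ⊆ M) :
    J ∈ DesBarMr P Mr M ↔ J ∈ Mr ∧ ∃ i, IsDescentAt M J i := by
  rw [DesBarMr, mem_filter]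
  constructor
  · rintro ⟨hJ, i, hides, hi⟩
    obtain ⟨J', hJ', hdes⟩ := (mem_desMr_iff hM hMr).1 hides
    exact ⟨hJ, i, eq_of_label_eq hM (hMr hJ') (hMr hJ) hdes.1 hi ▸ hdes⟩
  · rintro ⟨hJ, i, hdes⟩
    exact ⟨hJ, i, (mem_desMr_iff hM hMr).2 ⟨J, hJ, hdes⟩, hdes.1⟩

end Descents

section Components

variable {c : (GP P).ConnectedComponent} {M₁ M₂ Mr : Finset (ConnIdeal P)}

theorem mem_iff_of_filter_supp_eq (h₁ : M₁.filter (fun A => A ∈ c.supp) = Mr)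
    (h₂ : M₂.filter (fun A => A ∈ c.supp) = Mr) {J Z : ConnIdeal P} (hJ : J ∈ Mr)
    (hZJ : (GP P).Reachable Z J) : Z ∈ M₁ ↔ Z ∈ M₂ := by
  have hJc : J ∈ c.supp := (mem_filter.1 (h₁ ▸ hJ)).2
  have hZc : Z ∈ c.supp := (SimpleGraph.ConnectedComponent.sound hZJ).trans hJc
  calc Z ∈ M₁ ↔ Z ∈ M₁.filter (fun A => A ∈ c.supp) :=
        (mem_filter.trans (and_iff_left hZc)).symm
    _ ↔ Z ∈ M₂.filter (fun A => A ∈ c.supp) := by rw [h₁, h₂]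
    _ ↔ Z ∈ M₂ := mem_filter.trans (and_iff_left hZc)

theorem isDescentAt_of_filter_supp_eq (hnat : NatLabeled P) (hM₁ : IsMaxIndep (GP P) M₁)
    (hM₂ : IsMaxIndep (GP P) M₂) (h₁ : M₁.filter (fun A => A ∈ c.supp) = Mr)
    (h₂ : M₂.filter (fun A => A ∈ c.supp) = Mr) {J : ConnIdeal P} {i : Fin n} (hJ : J ∈ Mr)
    (hdes : IsDescentAt M₁ J i) : IsDescentAt M₂ J i :=
  hdes.of_agree hnat hM₁ hM₂ (mem_of_mem_filter _ (h₁ ▸ hJ))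
    (mem_of_mem_filter _ (h₂ ▸ hJ)) fun _ => mem_iff_of_filter_supp_eq h₁ h₂ hJ

theorem desMr_subset (hnat : NatLabeled P) (hM₁ : IsMaxIndep (GP P) M₁)
    (hM₂ : IsMaxIndep (GP P) M₂) (h₁ : M₁.filter (fun A => A ∈ c.supp) = Mr)
    (h₂ : M₂.filter (fun A => A ∈ c.supp) = Mr) :
    DesMr P Mr M₁ ⊆ DesMr P Mr M₂ := by
  intro i hi
  obtain ⟨J, hJ, hdes⟩ := (mem_desMr_iff hM₁ (h₁ ▸ filter_subset _ _)).1 hi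
  exact (mem_desMr_iff hM₂ (h₂ ▸ filter_subset _ _)).2
    ⟨J, hJ, isDescentAt_of_filter_supp_eq hnat hM₁ hM₂ h₁ h₂ hJ hdes⟩

theorem desBarMr_subset (hnat : NatLabeled P) (hM₁ : IsMaxIndep (GP P) M₁)
    (hM₂ : IsMaxIndep (GP P) M₂) (h₁ : M₁.filter (fun A => A ∈ c.supp) = Mr)
    (h₂ : M₂.filter (fun A => A ∈ c.supp) = Mr) :
    DesBarMr P Mr M₁ ⊆ DesBarMr P Mr M₂ := by
  intro J hJ
  obtain ⟨hJMr, i, hdes⟩ := (mem_desBarMr_iff hM₁ (h₁ ▸ filter_subset _ _)).1 hJ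
  exact (mem_desBarMr_iff hM₂ (h₂ ▸ filter_subset _ _)).2
    ⟨hJMr, i, isDescentAt_of_filter_supp_eq hnat hM₁ hM₂ h₁ h₂ hJMr hdes⟩

end Components

theorem statement_1_general (n : ℕ) (P : PartialOrder (Fin n)) (hnat : NatLabeled P)
    (c : (GP P).ConnectedComponent) (Mr : Finset (ConnIdeal P))
    (M1 M2 : Finset (ConnIdeal P))
    (hM1 : IsMaxIndep (GP P) M1) (hM2 : IsMaxIndep (GP P) M2)
    (h1 : M1.filter (fun A => A ∈ c.supp) = Mr)
    (h2 : M2.filter (fun A => A ∈ c.supp) = Mr) :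
    DesMr P Mr M1 = DesMr P Mr M2 ∧ DesBarMr P Mr M1 = DesBarMr P Mr M2 :=
  ⟨(desMr_subset hnat hM1 hM2 h1 h2).antisymm (desMr_subset hnat hM2 hM1 h2 h1),
    (desBarMr_subset hnat hM1 hM2 h1 h2).antisymm (desBarMr_subset hnat hM2 hM1 h2 h1)⟩

/-- Theorem 1.2: for a naturally labeled poset `P`, a connected
component `c` of `G_P` and a maximum independent set `M_r` of `c`, the sets
`Des(M_r, M)` and `Des̄(M_r, M)` do not depend on the choice of a maximum
independent set `M` of `G_P` with `M ∩ V(c) = M_r`. -/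
theorem statement_1 (n : ℕ) (P : PartialOrder (Fin n)) (hnat : NatLabeled P)
    (c : (GP P).ConnectedComponent) (Mr : Finset (ConnIdeal P))
    (hMr : IsMaxIndepOn (GP P) c.supp Mr)
    (M1 M2 : Finset (ConnIdeal P))
    (hM1 : IsMaxIndep (GP P) M1) (hM2 : IsMaxIndep (GP P) M2)
    (h1 : M1.filter (fun A => A ∈ c.supp) = Mr)
    (h2 : M2.filter (fun A => A ∈ c.supp) = Mr) :
    DesMr P Mr M1 = DesMr P Mr M2 ∧ DesBarMr P Mr M1 = DesBarMr P Mr M2 :=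
  statement_1_general n P hnat c Mr M1 M2 hM1 hM2 h1 h2
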